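/- For every integer d ≥ 2 and every integer m ≥ 0, the polynomials H_d(m) = Σ_{k=0}^{d} C(d,k)·C(m+d−k, d) satisfy the recurrence d·H_d(m) = (2m+1)·H_{d−1}(m) + (d−1)·H_{d−2}(m). -/

import Mathlib

/-!
Vandermonde's identity applied to `(m + d - k).choose d`, followed by the summation over `k`,
rewrites `H_d(m)` in the basis `2 ^ j * m.choose j` as `∑ j, d.choose j * 2 ^ j * m.choose j`; the
range of `j` can be taken to be `range (m + 1)`, independently of `d`. In this basis the recurrence
follows termwise from `d C(d,j) = j C(d-1,j-1) + (2j+1) C(d-1,j) + (d-1) C(d-2,j)` and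
`(2m+1) 2^j C(m,j) = (j+1) 2^(j+1) C(m,j+1) + (2j+1) 2^j C(m,j)`, the terms `j C(d-1,j-1)` and
`(j+1) 2^(j+1) C(m,j+1)` matching after an index shift.
-/
open Finset

def crossPolytopeEhrhart (d m : ℕ) : ℕ :=
  ∑ k ∈ range (d + 1), d.choose k * (m + d - k).choose d

namespace Nat

theorem choose_mul_choose_sub_comm (n i j : ℕ) :
    n.choose i * (n - i).choose j = n.choose j * (n - j).choose i := by
  have hi := choose_mul (n := n) (le_add_right i j)
  have hj := choose_mul (n := n) (le_add_left j i)
  rw [Nat.add_sub_cancel_left] at hi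
  rw [Nat.add_sub_cancel] at hj
  rw [← hi, ← hj, choose_symm_add]

theorem sum_range_choose_of_lt {n N : ℕ} (h : n < N) : ∑ k ∈ range N, n.choose k = 2 ^ n := by
  rw [eventually_constant_sum (fun _ => choose_eq_zero_of_lt) h, sum_range_choose]

theorem two_mul_add_one_mul_choose (m j : ℕ) :
    (2 * m + 1) * m.choose j = 2 * ((j + 1) * m.choose (j + 1)) + (2 * j + 1) * m.choose j := by
  linear_combination 2 * (j + 1) * choose_succ_succ' m j + 2 * add_one_mul_choose_eq m j

theorem add_two_mul_choose (n j : ℕ) :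
    (n + 2) * (n + 2).choose j
      = j * (n + 1).choose (j - 1) + (2 * j + 1) * (n + 1).choose j + (n + 1) * n.choose j := by
  cases j with
  | zero => simp; ring
  | succ i =>
    rw [Nat.add_sub_cancel]
    linear_combination (n + i + 3) * choose_succ_succ' (n + 1) i + add_one_mul_choose_eq (n + 1) i
      + (n + 1) * choose_succ_succ' n i + add_one_mul_choose_eq n i

end Nat

theorem Finset.sum_range_succ_shift {M : Type*} [AddCommMonoid M] (f : ℕ → M) (n : ℕ)
    (h0 : f 0 = 0) (hn : f (n + 1) = 0) :
    ∑ k ∈ range (n + 1), f k = ∑ k ∈ range (n + 1), f (k + 1) := by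
  rw [sum_range_succ', sum_range_succ, h0, hn]

theorem crossPolytopeEhrhart_eq_sum_two_pow (d m : ℕ) :
    crossPolytopeEhrhart d m = ∑ i ∈ range (d + 1), d.choose i * (2 ^ i * m.choose i) := by
  have vandermonde : ∀ k ∈ range (d + 1), d.choose k * (m + d - k).choose d
      = ∑ i ∈ range (d + 1), m.choose i * (d.choose k * (d - k).choose (d - i)) := by
    intro k hk
    rw [Nat.add_sub_assoc (Nat.lt_succ_iff.mp (mem_range.mp hk)), Nat.add_choose_eq,
      Nat.sum_antidiagonal_eq_sum_range_succ (fun i j => m.choose i * (d - k).choose j), mul_sum]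
    exact sum_congr rfl fun i _ => by ring
  rw [crossPolytopeEhrhart, sum_congr rfl vandermonde, sum_comm]
  refine sum_congr rfl fun i hi => ?_
  have hid : i ≤ d := Nat.lt_succ_iff.mp (mem_range.mp hi)
  simp_rw [Nat.choose_mul_choose_sub_comm d _ (d - i), Nat.sub_sub_self hid, Nat.choose_symm hid,
    ← mul_sum, Nat.sum_range_choose_of_lt (Nat.lt_succ_of_le hid)]
  ring

theorem crossPolytopeEhrhart_eq_sum_range_succ (d m : ℕ) :
    crossPolytopeEhrhart d m = ∑ j ∈ range (m + 1), d.choose j * (2 ^ j * m.choose j) := by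
  have hd : ∀ j ≥ d + 1, d.choose j * (2 ^ j * m.choose j) = 0 := fun j hj => by
    rw [Nat.choose_eq_zero_of_lt hj, zero_mul]
  have hm : ∀ j ≥ m + 1, d.choose j * (2 ^ j * m.choose j) = 0 := fun j hj => by
    rw [Nat.choose_eq_zero_of_lt hj, mul_zero, mul_zero]
  rw [crossPolytopeEhrhart_eq_sum_two_pow,
    ← eventually_constant_sum hd (by omega : d + 1 ≤ d + m + 1), eventually_constant_sum hm (by omega)]

theorem crossPolytopeEhrhart_add_two (n m : ℕ) :
    (n + 2) * crossPolytopeEhrhart (n + 2) m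
      = (2 * m + 1) * crossPolytopeEhrhart (n + 1) m + (n + 1) * crossPolytopeEhrhart n m := by
  set b : ℕ → ℕ := fun j => 2 ^ j * m.choose j with hb
  have hb_rec : ∀ j, (2 * m + 1) * b j = (j + 1) * b (j + 1) + (2 * j + 1) * b j := fun j => by
    simp only [hb, pow_succ]
    linear_combination 2 ^ j * Nat.two_mul_add_one_mul_choose m j
  have shift : ∑ j ∈ range (m + 1), j * (n + 1).choose (j - 1) * b j
      = ∑ j ∈ range (m + 1), (n + 1).choose j * ((j + 1) * b (j + 1)) := by
    rw [sum_range_succ_shift _ m (by simp) (by simp [hb])]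
    exact sum_congr rfl fun j _ => by rw [Nat.add_sub_cancel]; ring
  simp only [crossPolytopeEhrhart_eq_sum_range_succ, mul_sum]
  calc ∑ j ∈ range (m + 1), (n + 2) * ((n + 2).choose j * b j)
      = ∑ j ∈ range (m + 1), j * (n + 1).choose (j - 1) * b j
        + ∑ j ∈ range (m + 1), (n + 1).choose j * ((2 * j + 1) * b j)
        + ∑ j ∈ range (m + 1), (n + 1) * (n.choose j * b j) := by
        simp only [← sum_add_distrib, ← mul_assoc, Nat.add_two_mul_choose]
        exact sum_congr rfl fun j _ => by ring
    _ = ∑ j ∈ range (m + 1), (2 * m + 1) * ((n + 1).choose j * b j)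
        + ∑ j ∈ range (m + 1), (n + 1) * (n.choose j * b j) := by
        simp only [shift, ← sum_add_distrib, mul_left_comm _ ((n + 1).choose _), hb_rec, mul_add]

theorem cross_polytope_recurrence (d m : ℕ) (hd : 2 ≤ d) :
    d * (∑ k ∈ Finset.range (d + 1), d.choose k * (m + d - k).choose d)
      = (2 * m + 1) * (∑ k ∈ Finset.range d, (d - 1).choose k * (m + (d - 1) - k).choose (d - 1))
        + (d - 1) * (∑ k ∈ Finset.range (d - 1), (d - 2).choose k * (m + (d - 2) - k).choose (d - 2)) := by
  obtain ⟨n, rfl⟩ := Nat.exists_eq_add_of_le' hd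
  simp only [Nat.add_sub_cancel, Nat.add_succ_sub_one]
  exact crossPolytopeEhrhart_add_two n m
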